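/- Let p be a pattern and i a label in lbs(p) \ sing(p). Define fix(p,i) = p ∪ {{i}} and forget(p,i) = {S \ {i} : S ∈ p}. Then the set {fix(p,i), forget(p,i)} represents p: both are dominated by p, and every pattern q consistent with p is consistent with fix(p,i) or with forget(p,i). Concretely, if i ∈ lbs(q) then fix(p,i) ∼ q, and if i ∉ lbs(q) then forget(p,i) ∼ q. -/

import Mathlib

open Finset
open scoped Classical

namespace PatternST

variable {α : Type*} [DecidableEq α]

/-- `p` is a pattern over ground set `U` with zero element `z`:
a family of subsets of `U ∪ {z}` with exactly one member containing `z`. -/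
def IsPattern (z : α) (U : Finset α) (p : Finset (Finset α)) : Prop :=
  (∀ S ∈ p, S ⊆ insert z U) ∧ ∃! S, S ∈ p ∧ z ∈ S

/-- Two sets are linked if one belongs to `p`, the other to `q`, and they intersect. -/
def linkRel (p q : Finset (Finset α)) (S T : Finset α) : Prop :=
  ((S ∈ p ∧ T ∈ q) ∨ (S ∈ q ∧ T ∈ p)) ∧ (S ∩ T).Nonempty

/-- Reflexive-transitive (and, by symmetry of `linkRel`, symmetric) closure. -/
def conn (p q : Finset (Finset α)) : Finset α → Finset α → Prop :=
  Relation.ReflTransGen (linkRel p q)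

/-- The join `p ⋈ q`: unions of the equivalence classes of `conn` on `p ∪ q`. -/
noncomputable def pjoin (p q : Finset (Finset α)) : Finset (Finset α) :=
  (p ∪ q).image fun S => ((p ∪ q).filter fun T => conn p q S T).sup id

/-- `p` and `q` are consistent if `p ⋈ q` consists of a single set. -/
def consistent (p q : Finset (Finset α)) : Prop := (pjoin p q).card = 1

/-- The labels (elements of `U`, i.e. everything except `z`) occurring in `p`. -/
def lbs (z : α) (p : Finset (Finset α)) : Finset α := (p.sup id).erase z

/-- The labels appearing as singletons in `p`. -/
def sing (z : α) (p : Finset (Finset α)) : Finset α :=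
  (lbs z p).filter fun u => ({u} : Finset α) ∈ p

/-- A pattern is complete if every occurring label occurs as a singleton. -/
def Complete (z : α) (p : Finset (Finset α)) : Prop := lbs z p = sing z p

/-!
If `p` and `q` both have a set containing the zero `z`, they are consistent exactly when every
set of `p ∪ q` is linked, through a chain of intersecting sets alternating between `p` and `q`,
to the zero set of `q`. Chains for `p` carry over to `fix(p,i)` unchanged, and to `forget(p,i)` by
erasing `i`, which is harmless when `i` does not occur in `q`. Conversely, every set of `fix(p,i)`
and of `forget(p,i)` lies inside a set of `p`, so a chain for either of them lifts to a chain
for `p` through supersets: the element shared by two consecutive sets then lies in a set of `p`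
and a set of `q`, and any two sets of `p ∪ q` containing such an element are connected.
-/

theorem IsPattern.exists_mem_zero {z : α} {U : Finset α} {p : Finset (Finset α)}
    (hp : IsPattern z U p) : ∃ S ∈ p, z ∈ S :=
  hp.2.exists

theorem mem_lbs {z i : α} {p : Finset (Finset α)} :
    i ∈ lbs z p ↔ i ≠ z ∧ ∃ S ∈ p, i ∈ S := by
  simp [lbs, mem_sup]

section Conn

variable {p q p' q' : Finset (Finset α)} {S T : Finset α}

theorem linkRel_symm (h : linkRel p q S T) : linkRel p q T S :=
  ⟨h.1.symm.imp And.symm And.symm, inter_comm S T ▸ h.2⟩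

theorem conn_symm (h : conn p q S T) : conn p q T S := by
  induction h with
  | refl => exact .refl
  | tail _ hlink ih => exact .head (linkRel_symm hlink) ih

theorem conn_of_mem {x : α} (hS : S ∈ p) (hT : T ∈ q) (hxS : x ∈ S) (hxT : x ∈ T) :
    conn p q S T :=
  .single ⟨.inl ⟨hS, hT⟩, x, mem_inter.2 ⟨hxS, hxT⟩⟩

theorem conn_map (f : Finset α → Finset α)
    (hf : ∀ S ∈ p, ∀ T ∈ q, ∀ x ∈ S, x ∈ T → conn p' q' (f S) (f T))
    (h : conn p q S T) : conn p' q' (f S) (f T) := by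
  refine Relation.ReflTransGen.lift' f (fun S T hST => ?_) S T h
  obtain ⟨hmem | hmem, x, hx⟩ := hST <;> rw [mem_inter] at hx
  · exact hf S hmem.1 T hmem.2 x hx.1 hx.2
  · exact conn_symm (hf T hmem.2 S hmem.1 x hx.2 hx.1)

theorem conn_of_common_mem {x : α} {A B : Finset α} (hA : A ∈ p) (hB : B ∈ q)
    (hxA : x ∈ A) (hxB : x ∈ B) (hS : S ∈ p ∪ q) (hT : T ∈ p ∪ q) (hxS : x ∈ S)
    (hxT : x ∈ T) : conn p q S T := by
  have conn_B : ∀ R ∈ p ∪ q, x ∈ R → conn p q R B := by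
    intro R hR hxR
    rcases mem_union.1 hR with hR | hR
    · exact conn_of_mem hR hB hxR hxB
    · exact (conn_symm (conn_of_mem hA hR hxA hxR)).trans (conn_of_mem hA hB hxA hxB)
  exact (conn_B S hS hxS).trans (conn_symm (conn_B T hT hxT))

theorem consistent_of_forall_conn (hT : T ∈ p ∪ q) (h : ∀ S ∈ p ∪ q, conn p q S T) :
    consistent p q := by
  have hclass : ∀ S ∈ p ∪ q, ((p ∪ q).filter fun R => conn p q S R) = p ∪ q :=
    fun S hS => filter_true_of_mem fun R hR => (h S hS).trans (conn_symm (h R hR))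
  rw [consistent, pjoin, card_eq_one]
  refine ⟨(p ∪ q).sup id, eq_singleton_iff_unique_mem.2 ⟨?_, ?_⟩⟩
  · exact mem_image.2 ⟨T, hT, by rw [hclass T hT]⟩
  · exact forall_mem_image.2 fun S hS => by rw [hclass S hS]

theorem conn_of_consistent {z : α} {A B : Finset α} (h : consistent p q) (hA : A ∈ p)
    (hB : B ∈ q) (hzA : z ∈ A) (hzB : z ∈ B) : ∀ S ∈ p ∪ q, conn p q S B := by
  obtain ⟨X, hX⟩ := card_eq_one.1 h
  have hclass : ∀ S ∈ p ∪ q, ((p ∪ q).filter fun R => conn p q S R).sup id = X :=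
    fun S hS => mem_singleton.1 (hX ▸ mem_image_of_mem _ hS)
  have hB' : B ∈ p ∪ q := mem_union_right _ hB
  intro S hS
  -- the classes of `S` and of `B` have the same union, so `z` lies in a set connected to `S`
  have hz : z ∈ ((p ∪ q).filter fun R => conn p q S R).sup id := by
    rw [hclass S hS, ← hclass B hB']
    exact mem_sup.2 ⟨B, mem_filter.2 ⟨hB', .refl⟩, hzB⟩
  obtain ⟨R, hR, hzR⟩ := mem_sup.1 hz
  obtain ⟨hRpq, hSR⟩ := mem_filter.1 hR
  exact hSR.trans (conn_of_common_mem hA hB hzA hzB hRpq hB' hzR hzB)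

end Conn

section Domination

variable {z : α} {p p' q : Finset (Finset α)} {X Y C : Finset α}

theorem exists_conn_superset_of_linkRel (hp'p : ∀ X ∈ p', ∃ A ∈ p, X ⊆ A)
    (h : linkRel p' q X Y) (hC : C ∈ p ∪ q) (hXC : X ⊆ C) :
    ∃ D ∈ p ∪ q, Y ⊆ D ∧ conn p q C D := by
  obtain ⟨hmem | hmem, x, hx⟩ := h <;> rw [mem_inter] at hx
  · obtain ⟨A, hA, hXA⟩ := hp'p X hmem.1
    have hY : Y ∈ p ∪ q := mem_union_right _ hmem.2
    exact ⟨Y, hY, subset_rfl,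
      conn_of_common_mem hA hmem.2 (hXA hx.1) hx.2 hC hY (hXC hx.1) hx.2⟩
  · obtain ⟨A, hA, hYA⟩ := hp'p Y hmem.2
    have hA' : A ∈ p ∪ q := mem_union_left _ hA
    exact ⟨A, hA', hYA,
      conn_of_common_mem hA hmem.1 (hYA hx.2) hx.1 hC hA' (hXC hx.1) (hYA hx.2)⟩

theorem exists_conn_superset_of_conn (hp'p : ∀ X ∈ p', ∃ A ∈ p, X ⊆ A)
    (h : conn p' q X Y) (hC : C ∈ p ∪ q) (hXC : X ⊆ C) :
    ∃ D ∈ p ∪ q, Y ⊆ D ∧ conn p q C D := by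
  induction h with
  | refl => exact ⟨C, hC, hXC, .refl⟩
  | tail _ hlink ih =>
    obtain ⟨D, hD, hYD, hCD⟩ := ih
    obtain ⟨E, hE, hZE, hDE⟩ := exists_conn_superset_of_linkRel hp'p hlink hD hYD
    exact ⟨E, hE, hZE, hCD.trans hDE⟩

theorem consistent_of_consistent_of_forall_subset (hp'p : ∀ X ∈ p', ∃ A ∈ p, X ⊆ A)
    (hpp' : ∀ S ∈ p, ∃ X ∈ p', X ⊆ S) (hp' : ∃ S ∈ p', z ∈ S) (hq : ∃ S ∈ q, z ∈ S)
    (h : consistent p' q) : consistent p q := by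
  obtain ⟨Sp', hSp', hzSp'⟩ := hp'
  obtain ⟨Sq, hSq, hzSq⟩ := hq
  obtain ⟨Sp, hSp, hSp'Sp⟩ := hp'p Sp' hSp'
  have hSq' : Sq ∈ p ∪ q := mem_union_right _ hSq
  refine consistent_of_forall_conn hSq' fun S hS => ?_
  obtain ⟨X, hX, hXS⟩ : ∃ X ∈ p' ∪ q, X ⊆ S := by
    rcases mem_union.1 hS with hS | hS
    · obtain ⟨X, hX, hXS⟩ := hpp' S hS
      exact ⟨X, mem_union_left _ hX, hXS⟩
    · exact ⟨S, mem_union_right _ hS, subset_rfl⟩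
  obtain ⟨D, hD, hSqD, hSD⟩ := exists_conn_superset_of_conn hp'p
    (conn_of_consistent h hSp' hSq hzSp' hzSq X hX) hS hXS
  exact hSD.trans (conn_of_common_mem hSp hSq (hSp'Sp hzSp') hzSq hD hSq' (hSqD hzSq) hzSq)

theorem consistent_of_consistent_insert (hC : C ∈ p) (hXC : X ⊆ C) (hp : ∃ S ∈ p, z ∈ S)
    (hq : ∃ S ∈ q, z ∈ S) : consistent (insert X p) q → consistent p q := by
  obtain ⟨Sp, hSp, hzSp⟩ := hp
  exact consistent_of_consistent_of_forall_subset
    ((forall_mem_insert _ _ _).2 ⟨⟨C, hC, hXC⟩, fun S hS => ⟨S, hS, subset_rfl⟩⟩)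
    (fun S hS => ⟨S, mem_insert_of_mem hS, subset_rfl⟩)
    ⟨Sp, mem_insert_of_mem hSp, hzSp⟩ hq

theorem consistent_of_consistent_image_erase {i : α} (hiz : i ≠ z) (hp : ∃ S ∈ p, z ∈ S)
    (hq : ∃ S ∈ q, z ∈ S) : consistent (p.image fun S => S.erase i) q → consistent p q := by
  obtain ⟨Sp, hSp, hzSp⟩ := hp
  exact consistent_of_consistent_of_forall_subset
    (forall_mem_image.2 fun S hS => ⟨S, hS, erase_subset i S⟩)
    (fun S hS => ⟨S.erase i, mem_image_of_mem _ hS, erase_subset i S⟩)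
    ⟨Sp.erase i, mem_image_of_mem _ hSp, mem_erase.2 ⟨hiz.symm, hzSp⟩⟩ hq

end Domination

section Extension

variable {z : α} {p q : Finset (Finset α)} {X B : Finset α}

theorem consistent_insert_of_consistent (hB : B ∈ q) (hXB : (X ∩ B).Nonempty)
    (hp : ∃ S ∈ p, z ∈ S) (hq : ∃ S ∈ q, z ∈ S) (h : consistent p q) :
    consistent (insert X p) q := by
  obtain ⟨Sp, hSp, hzSp⟩ := hp
  obtain ⟨Sq, hSq, hzSq⟩ := hq
  have hconn := conn_of_consistent h hSp hSq hzSp hzSq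
  have hlift : ∀ {S T}, conn p q S T → conn (insert X p) q S T :=
    conn_map id fun S hS T hT x hxS hxT => conn_of_mem (mem_insert_of_mem hS) hT hxS hxT
  refine consistent_of_forall_conn (mem_union_right _ hSq) fun S hS => ?_
  rcases mem_union.1 hS with hS | hS
  · rcases mem_insert.1 hS with rfl | hS
    · obtain ⟨x, hx⟩ := hXB
      rw [mem_inter] at hx
      exact (conn_of_mem (mem_insert_self _ _) hB hx.1 hx.2).trans
        (hlift (hconn B (mem_union_right _ hB)))
    · exact hlift (hconn S (mem_union_left _ hS))
  · exact hlift (hconn S (mem_union_right _ hS))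

theorem consistent_image_erase_of_consistent {i : α} (hi : ∀ B ∈ q, i ∉ B)
    (hp : ∃ S ∈ p, z ∈ S) (hq : ∃ S ∈ q, z ∈ S) (h : consistent p q) :
    consistent (p.image fun S => S.erase i) q := by
  obtain ⟨Sp, hSp, hzSp⟩ := hp
  obtain ⟨Sq, hSq, hzSq⟩ := hq
  have hconn := conn_of_consistent h hSp hSq hzSp hzSq
  have herase_q : ∀ B ∈ q, B.erase i = B := fun B hB => erase_eq_of_notMem (hi B hB)
  have hlift : ∀ {S T}, conn p q S T →
      conn (p.image fun S => S.erase i) q (S.erase i) (T.erase i) :=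
    conn_map (·.erase i) fun S hS T hT x hxS hxT => by
      have hxi : x ≠ i := ne_of_mem_of_not_mem hxT (hi T hT)
      rw [herase_q T hT]
      exact conn_of_mem (mem_image_of_mem _ hS) hT (mem_erase.2 ⟨hxi, hxS⟩) hxT
  refine consistent_of_forall_conn (mem_union_right _ hSq) fun S hS => ?_
  rw [← herase_q Sq hSq]
  rcases mem_union.1 hS with hS | hS
  · obtain ⟨C, hC, rfl⟩ := mem_image.1 hS
    exact hlift (hconn C (mem_union_left _ hC))
  · rw [← herase_q S hS]
    exact hlift (hconn S (mem_union_right _ hS))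

end Extension

/-- `{fix(p,i), forget(p,i)}` represents `p`: both are dominated by `p`, and every
pattern consistent with `p` is consistent with the fix (if `i` occurs in it) or
with the forget (if `i` does not occur in it). -/
theorem fix_forget_represent (z : α) (U : Finset α) (p : Finset (Finset α))
    (hp : IsPattern z U p) (i : α) (hi : i ∈ lbs z p \ sing z p) :
    (∀ q : Finset (Finset α), IsPattern z U q →
      consistent (insert ({i} : Finset α) p) q → consistent p q) ∧
    (∀ q : Finset (Finset α), IsPattern z U q →
      consistent (p.image fun S => S.erase i) q → consistent p q) ∧
    (∀ q : Finset (Finset α), IsPattern z U q → consistent p q →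
      (i ∈ lbs z q → consistent (insert ({i} : Finset α) p) q) ∧
      (i ∉ lbs z q → consistent (p.image fun S => S.erase i) q)) := by
  obtain ⟨hiz, A, hA, hiA⟩ := mem_lbs.1 (mem_sdiff.1 hi).1
  have hzp := hp.exists_mem_zero
  refine ⟨fun q hq => consistent_of_consistent_insert hA (singleton_subset_iff.2 hiA) hzp
      hq.exists_mem_zero,
    fun q hq => consistent_of_consistent_image_erase hiz hzp hq.exists_mem_zero,
    fun q hq hpq => ⟨fun hiq => ?_, fun hiq => ?_⟩⟩
  · obtain ⟨-, B, hB, hiB⟩ := mem_lbs.1 hiq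
    exact consistent_insert_of_consistent hB ⟨i, mem_inter.2 ⟨mem_singleton_self i, hiB⟩⟩
      hzp hq.exists_mem_zero hpq
  · exact consistent_image_erase_of_consistent
      (fun B hB hiB => hiq (mem_lbs.2 ⟨hiz, B, hB, hiB⟩)) hzp hq.exists_mem_zero hpq

end PatternST
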